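/- arXiv:1509.05445 — 3 statements merged into one kernel-verified Lean document; each statement's English description precedes it below -/
import Mathlib

section
/- For every integer n ≥ 4, there exist at least 2^{n−3} pairwise distinct unique configurations of size n; that is, the set of configurations P of size n for which some real sequence A of length n has P as its strictly-unique output configuration has cardinality at least 2^{n−3}. -/
/-- Window sum: `W A p ℓ = a_p + a_{p+1} + ⋯ + a_{p+ℓ-1}` for a 1-indexed sequence `A`. -/
noncomputable def W (A : ℕ → ℝ) (p ℓ : ℕ) : ℝ := ∑ i ∈ Finset.Ico p (p + ℓ), A i

open Finset

noncomputable def Aseq (n : ℕ) (b : Fin (n - 3) → Bool) : ℕ → ℝ := fun j =>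
  if j = 2 then 1
  else if h : 3 ≤ j ∧ j ≤ n - 1 then
    (if b ⟨j - 3, by omega⟩ then 1 else -1) * (4 : ℝ)⁻¹ ^ j
  else if j = n then -(4 : ℝ)⁻¹ ^ n
  else 0

def Conf (n : ℕ) (b : Fin (n - 3) → Bool) : Fin n → ℕ := fun ℓ =>
  if h : 1 ≤ ℓ.1 ∧ ℓ.1 ≤ n - 3 then (if b ⟨ℓ.1 - 1, by omega⟩ then 2 else 1)
  else if ℓ.1 = 0 then 2 else 1

lemma Aseq_abs_le (n : ℕ) (b : Fin (n - 3) → Bool) (j : ℕ) (hj : j ≠ 2) :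
    |Aseq n b j| ≤ (4 : ℝ)⁻¹ ^ j := by
  unfold Aseq
  rw [if_neg hj]
  have hp : |(4:ℝ)⁻¹ ^ j| = (4:ℝ)⁻¹ ^ j := abs_of_nonneg (by positivity)
  split_ifs with h1 h2 h3
  · rw [abs_mul, hp]; norm_num
  · rw [abs_mul, hp]; norm_num
  · subst h3; rw [abs_neg]; rw [hp]
  · simp only [abs_zero]; positivity

lemma mygeom_le (M : ℕ) : ∑ i ∈ Finset.Ico 1 M, (4 : ℝ)⁻¹ ^ i ≤ 1 / 3 := by
  rcases Nat.lt_or_ge M 1 with h | h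
  · interval_cases M; simp
  · rw [Finset.sum_Ico_eq_sub _ h]
    have h1 : ∑ i ∈ range M, (4:ℝ)⁻¹ ^ i = ((4:ℝ)⁻¹ ^ M - 1) / ((4:ℝ)⁻¹ - 1) :=
      geom_sum_eq (by norm_num) M
    have h2 : ∑ i ∈ range 1, (4:ℝ)⁻¹ ^ i = 1 := by simp
    have h3 : (0:ℝ) ≤ (4:ℝ)⁻¹ ^ M := by positivity
    have key : ((4:ℝ)⁻¹ ^ M - 1) / ((4:ℝ)⁻¹ - 1) = (1 - (4:ℝ)⁻¹ ^ M) * (4/3) := by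
      field_simp; ring
    rw [h1, h2, key]
    nlinarith

lemma sum_small (n : ℕ) (b : Fin (n - 3) → Bool) (S : Finset ℕ) (M : ℕ)
    (hS : S ⊆ Finset.Ico 1 M) (h2 : 2 ∉ S) : |∑ i ∈ S, Aseq n b i| ≤ 1 / 3 := by
  calc |∑ i ∈ S, Aseq n b i| ≤ ∑ i ∈ S, |Aseq n b i| := Finset.abs_sum_le_sum_abs _ _
    _ ≤ ∑ i ∈ S, (4:ℝ)⁻¹ ^ i := by
        refine Finset.sum_le_sum fun i hi => Aseq_abs_le n b i ?_
        rintro rfl; exact h2 hi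
    _ ≤ ∑ i ∈ Finset.Ico 1 M, (4:ℝ)⁻¹ ^ i :=
        Finset.sum_le_sum_of_subset_of_nonneg hS (fun i _ _ => by positivity)
    _ ≤ 1 / 3 := mygeom_le M

lemma Aseq_two (n : ℕ) (b : Fin (n - 3) → Bool) : Aseq n b 2 = 1 := by
  unfold Aseq; rw [if_pos rfl]

lemma Aseq_one (n : ℕ) (hn : 4 ≤ n) (b : Fin (n - 3) → Bool) : Aseq n b 1 = 0 := by
  unfold Aseq
  rw [if_neg (by omega), dif_neg (by omega), if_neg (by omega)]

lemma Aseq_mid (n : ℕ) (b : Fin (n - 3) → Bool) (j : ℕ) (h3 : 3 ≤ j) (hj : j ≤ n - 1) :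
    Aseq n b j = (if b ⟨j - 3, by omega⟩ then 1 else -1) * (4 : ℝ)⁻¹ ^ j := by
  unfold Aseq
  rw [if_neg (by omega), dif_pos ⟨h3, hj⟩]

lemma Aseq_last (n : ℕ) (hn : 4 ≤ n) (b : Fin (n - 3) → Bool) :
    Aseq n b n = -(4 : ℝ)⁻¹ ^ n := by
  unfold Aseq
  rw [if_neg (by omega), dif_neg (by omega), if_pos rfl]

lemma W_big (n : ℕ) (b : Fin (n - 3) → Bool) (p L : ℕ) (hp1 : 1 ≤ p) (hp2 : p ≤ 2)
    (hL : 2 < p + L) : 2 / 3 ≤ W (Aseq n b) p L := by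
  have h2 : 2 ∈ Finset.Ico p (p + L) := Finset.mem_Ico.2 ⟨hp2, hL⟩
  have e := Finset.add_sum_erase _ (Aseq n b) h2
  have hsmall : |∑ i ∈ (Finset.Ico p (p + L)).erase 2, Aseq n b i| ≤ 1 / 3 := by
    refine sum_small n b _ (p + L) ?_ (Finset.notMem_erase _ _)
    intro i hi
    have := Finset.mem_erase.1 hi
    have := Finset.mem_Ico.1 this.2
    exact Finset.mem_Ico.2 ⟨by omega, this.2⟩
  have := abs_le.1 hsmall
  unfold W
  rw [← e, Aseq_two]
  linarith [this.1]

lemma W_far (n : ℕ) (b : Fin (n - 3) → Bool) (q L : ℕ) (hq : 3 ≤ q) :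
    W (Aseq n b) q L ≤ 1 / 3 := by
  have hsmall : |∑ i ∈ Finset.Ico q (q + L), Aseq n b i| ≤ 1 / 3 := by
    refine sum_small n b _ (q + L) ?_ ?_
    · intro i hi
      have := Finset.mem_Ico.1 hi
      exact Finset.mem_Ico.2 ⟨by omega, this.2⟩
    · intro h
      have := Finset.mem_Ico.1 h
      omega
  exact le_trans (le_abs_self _) hsmall

lemma W_diff (n : ℕ) (hn : 4 ≤ n) (b : Fin (n - 3) → Bool) (L : ℕ) (hL : 1 ≤ L) :
    W (Aseq n b) 1 L - W (Aseq n b) 2 L = - Aseq n b (1 + L) := by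
  unfold W
  have e1 : ∑ i ∈ Finset.Ico 1 (1 + L), Aseq n b i
      = Aseq n b 1 + ∑ i ∈ Finset.Ico 2 (1 + L), Aseq n b i :=
    Finset.sum_eq_sum_Ico_succ_bot (by omega) _
  have e2 : ∑ i ∈ Finset.Ico 2 (1 + L + 1), Aseq n b i
      = ∑ i ∈ Finset.Ico 2 (1 + L), Aseq n b i + Aseq n b (1 + L) :=
    Finset.sum_Ico_succ_top (by omega) _
  rw [show 2 + L = 1 + L + 1 by omega, e1, e2, Aseq_one n hn]
  ring

lemma conf_cases (n : ℕ) (b : Fin (n - 3) → Bool) (ℓ : Fin n) :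
    Conf n b ℓ = 1 ∨ Conf n b ℓ = 2 := by
  unfold Conf; split_ifs <;> simp

lemma conf_strict (n : ℕ) (hn : 4 ≤ n) (b : Fin (n - 3) → Bool) :
    ∀ ℓ : Fin n, ∀ q : ℕ, 1 ≤ q → q ≤ n - (ℓ.1 + 1) + 1 →
      q ≠ Conf n b ℓ → W (Aseq n b) (Conf n b ℓ) (ℓ.1 + 1) > W (Aseq n b) q (ℓ.1 + 1) := by
  intro ℓ q hq1 hq2 hqne
  have hl := ℓ.2
  rcases Nat.eq_zero_or_pos ℓ.1 with h0 | h0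
  · -- length 1, P = 2
    have hP : Conf n b ℓ = 2 := by unfold Conf; rw [dif_neg (by omega), if_pos h0]
    rw [hP]
    rw [hP] at hqne
    have e2 : W (Aseq n b) 2 (ℓ.1 + 1) = 1 := by
      unfold W; rw [h0, Nat.zero_add, Finset.Ico_add_one_right_eq_Icc, Finset.Icc_self, Finset.sum_singleton, Aseq_two]
    have eq : W (Aseq n b) q (ℓ.1 + 1) = Aseq n b q := by
      unfold W; rw [h0, Nat.zero_add, Finset.Ico_add_one_right_eq_Icc, Finset.Icc_self, Finset.sum_singleton]
    rw [e2, eq]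
    have h1 := Aseq_abs_le n b q hqne
    have h2 : (4:ℝ)⁻¹ ^ q ≤ (4:ℝ)⁻¹ ^ 1 :=
      pow_le_pow_of_le_one (by norm_num) (by norm_num) hq1
    have h3 : ((4:ℝ)⁻¹) ^ 1 = 1/4 := by norm_num
    have := abs_le.1 h1
    linarith [this.2]
  · -- length ≥ 2
    rcases le_or_gt 3 q with hq3 | hq3
    · -- far q
      have hPc := conf_cases n b ℓ
      have hbig : 2 / 3 ≤ W (Aseq n b) (Conf n b ℓ) (ℓ.1 + 1) := by
        rcases hPc with h | h <;> rw [h] <;> exact W_big n b _ _ (by omega) (by omega) (by omega)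
      have hfar := W_far n b q (ℓ.1 + 1) hq3
      linarith
    · -- q ∈ {1,2}
      rcases Nat.lt_or_ge ℓ.1 (n - 1) with hcase | hcase
      · rcases le_or_gt ℓ.1 (n - 3) with hmid | hmid
        · -- middle lengths: bit decides
          have hidx : ℓ.1 + 2 - 3 = ℓ.1 - 1 := by omega
          have hAm := Aseq_mid n b (ℓ.1 + 2) (by omega) (by omega)
          have hP : Conf n b ℓ = if b ⟨ℓ.1 - 1, by omega⟩ then 2 else 1 := by
            unfold Conf; rw [dif_pos ⟨h0, hmid⟩]
          have hfe : (⟨ℓ.1 + 2 - 3, by omega⟩ : Fin (n - 3)) = ⟨ℓ.1 - 1, by omega⟩ :=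
            Fin.ext hidx
          rw [hfe] at hAm
          have hd := W_diff n hn b (ℓ.1 + 1) (by omega)
          rw [show 1 + (ℓ.1 + 1) = ℓ.1 + 2 by omega] at hd
          have hpow : (0:ℝ) < (4:ℝ)⁻¹ ^ (ℓ.1 + 2) := by positivity
          cases hb : b ⟨ℓ.1 - 1, by omega⟩ with
          | true =>
            rw [hb] at hP hAm
            simp only [if_true] at hP hAm
            rw [hP]; rw [hP] at hqne
            have hq : q = 1 := by omega
            subst hq
            rw [hAm] at hd
            linarith
          | false =>
            rw [hb] at hP hAm
            simp only [if_neg (by simp : ¬ (false = true))] at hP hAm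
            rw [hP]; rw [hP] at hqne
            have hq : q = 2 := by omega
            subst hq
            rw [hAm] at hd
            linarith
        · -- length n-1: ℓ.1 = n-2
          have hℓ : ℓ.1 = n - 2 := by omega
          have hP : Conf n b ℓ = 1 := by
            unfold Conf; rw [dif_neg (by omega), if_neg (by omega)]
          rw [hP]; rw [hP] at hqne
          have hq : q = 2 := by omega
          subst hq
          have hd := W_diff n hn b (ℓ.1 + 1) (by omega)
          rw [show 1 + (ℓ.1 + 1) = n by omega, Aseq_last n hn] at hd
          have hpow : (0:ℝ) < (4:ℝ)⁻¹ ^ n := by positivity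
          linarith
      · -- length n: no valid q ≠ P
        exfalso
        have hℓ : ℓ.1 = n - 1 := by omega
        have hP : Conf n b ℓ = 1 := by
          unfold Conf; rw [dif_neg (by omega), if_neg (by omega)]
        omega

lemma conf_bounds (n : ℕ) (hn : 4 ≤ n) (b : Fin (n - 3) → Bool) :
    ∀ ℓ : Fin n, 1 ≤ Conf n b ℓ ∧ Conf n b ℓ ≤ n - (ℓ.1 + 1) + 1 := by
  intro ℓ
  have hl := ℓ.2
  unfold Conf
  split_ifs <;> omega

lemma conf_inj (n : ℕ) (hn : 4 ≤ n) : Function.Injective (Conf n) := by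
  intro b b' h
  funext i
  have hi := i.2
  have hc := congrFun h (⟨i.1 + 1, by omega⟩ : Fin n)
  have e : ∀ c : Fin (n - 3) → Bool,
      Conf n c (⟨i.1 + 1, by omega⟩ : Fin n) = if c i then 2 else 1 := by
    intro c
    unfold Conf
    rw [dif_pos (show 1 ≤ i.1 + 1 ∧ i.1 + 1 ≤ n - 3 by omega)]
    congr 1
  rw [e b, e b'] at hc
  cases hb : b i <;> cases hb' : b' i <;> rw [hb, hb'] at hc <;> simp_all

/-- For every `n ≥ 4` there are at least `2^(n-3)` unique configurations of size `n`:
the set of configurations `P` (here `P ℓ` is the starting position `p_{ℓ+1}` of a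
maximum window of length `ℓ+1`, for `ℓ : Fin n`) admitting a sequence `A` for which
`P` is the strictly-unique output configuration has cardinality at least `2^(n-3)`. -/
theorem exp_many_unique_configurations (n : ℕ) (hn : 4 ≤ n) :
    2 ^ (n - 3) ≤
      Set.ncard {P : Fin n → ℕ |
        (∀ ℓ : Fin n, 1 ≤ P ℓ ∧ P ℓ ≤ n - (ℓ.1 + 1) + 1) ∧
        ∃ A : ℕ → ℝ, ∀ ℓ : Fin n, ∀ q : ℕ, 1 ≤ q → q ≤ n - (ℓ.1 + 1) + 1 →
          q ≠ P ℓ → W A (P ℓ) (ℓ.1 + 1) > W A q (ℓ.1 + 1)} := by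
  set S := {P : Fin n → ℕ |
        (∀ ℓ : Fin n, 1 ≤ P ℓ ∧ P ℓ ≤ n - (ℓ.1 + 1) + 1) ∧
        ∃ A : ℕ → ℝ, ∀ ℓ : Fin n, ∀ q : ℕ, 1 ≤ q → q ≤ n - (ℓ.1 + 1) + 1 →
          q ≠ P ℓ → W A (P ℓ) (ℓ.1 + 1) > W A q (ℓ.1 + 1)} with hSdef
  have hmem : ∀ b : Fin (n - 3) → Bool, Conf n b ∈ S := fun b =>
    ⟨conf_bounds n hn b, Aseq n b, conf_strict n hn b⟩
  have hsub : Set.range (Conf n) ⊆ S := by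
    rintro P ⟨b, rfl⟩; exact hmem b
  have hfin : S.Finite := by
    have hT : (Set.pi Set.univ (fun _ : Fin n => Set.Iic n)).Finite :=
      Set.Finite.pi (fun _ => Set.finite_Iic n)
    refine hT.subset ?_
    intro P hP ℓ _
    have := (hP.1 ℓ).2
    have hl := ℓ.2
    simp only [Set.mem_Iic]
    omega
  have hcard : Set.ncard (Set.range (Conf n)) = 2 ^ (n - 3) := by
    rw [← Set.image_univ, Set.ncard_image_of_injective _ (conf_inj n hn), Set.ncard_univ,
      Nat.card_eq_fintype_card]
    simp
  calc 2 ^ (n - 3) = Set.ncard (Set.range (Conf n)) := hcard.symm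
    _ ≤ Set.ncard S := Set.ncard_le_ncard hsub hfin
end

section
/- (Non-Adjacency Property) Let P = (p_1,…,p_n) be a configuration of size n. If there exist indices i, j ∈ {1,…,n} such that p_j = p_i + i, then P is not unique: there is no real sequence A of length n for which P is the strictly-unique output configuration. -/
/-- `P` is a configuration of size `n`: `1 ≤ p_ℓ ≤ n - ℓ + 1` for every `ℓ ∈ {1,…,n}`. -/
def IsConfig (n : ℕ) (P : ℕ → ℕ) : Prop :=
  ∀ ℓ, 1 ≤ ℓ → ℓ ≤ n → 1 ≤ P ℓ ∧ P ℓ ≤ n - ℓ + 1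

/-- `P` is the strictly-unique output configuration for `A`. -/
def StrictlyUniqueFor (n : ℕ) (A : ℕ → ℝ) (P : ℕ → ℕ) : Prop :=
  ∀ ℓ, 1 ≤ ℓ → ℓ ≤ n → ∀ q, 1 ≤ q → q ≤ n - ℓ + 1 → q ≠ P ℓ → W A (P ℓ) ℓ > W A q ℓ

/-- Non-Adjacency Property: if a configuration `P` of size `n` has indices
`i, j ∈ {1,…,n}` with `p_j = p_i + i`, then `P` is not unique. -/
theorem non_adjacency_property
    (n : ℕ) (P : ℕ → ℕ) (hconf : IsConfig n P)
    (i j : ℕ) (hi1 : 1 ≤ i) (hi2 : i ≤ n) (hj1 : 1 ≤ j) (hj2 : j ≤ n)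
    (hadj : P j = P i + i) :
    ¬ ∃ A : ℕ → ℝ, StrictlyUniqueFor n A P := by
  rintro ⟨A, hA⟩
  obtain ⟨hci1, hci2⟩ := hconf i hi1 hi2
  obtain ⟨hcj1, hcj2⟩ := hconf j hj1 hj2
  have hb : P i + i + j ≤ n + 1 := by omega
  have hsplit : ∀ p ℓ m : ℕ, W A p (ℓ + m) = W A p ℓ + W A (p + ℓ) m := by
    intro p ℓ m
    unfold W
    rw [← Nat.add_assoc]
    exact (Finset.sum_Ico_consecutive A (by omega : p ≤ p + ℓ)
      (by omega : p + ℓ ≤ p + ℓ + m)).symm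
  have E1 : W A (P i) (i + j) = W A (P i) i + W A (P j) j := by
    rw [hsplit, hadj]
  have E2 : W A (P i) (j + i) = W A (P i) j + W A (P i + j) i := by
    rw [hsplit]
  have h1 : W A (P i) i > W A (P i + j) i :=
    hA i hi1 hi2 (P i + j) (by omega) (by omega) (by omega)
  have h2 : W A (P i) j ≤ W A (P j) j := by
    rcases eq_or_ne (P i) (P j) with h | h
    · rw [h]
    · exact le_of_lt (hA j hj1 hj2 (P i) hci1 (by omega) h)
  have hcomm : W A (P i) (i + j) = W A (P i) (j + i) := by rw [Nat.add_comm]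
  linarith
end

section
/- The configuration P = (2, 4, 2, 1, 2, 1) of size 6 satisfies the non-adjacency property (there are no indices i, j ∈ {1,…,6} with p_j = p_i + i), and nevertheless P is not unique: there is no real sequence A = (a_1,…,a_6) simultaneously satisfying a_2 > a_4, a_4 + a_5 > a_1 + a_2, and a_1 + a_2 + a_3 + a_4 > a_2 + a_3 + a_4 + a_5; consequently no A ∈ ℝ⁶ has P as its strictly-unique output configuration. -/
/-- The configuration `P = (2, 4, 2, 1, 2, 1)` of size 6. -/
def P642 : ℕ → ℕ := fun ℓ =>
  if ℓ = 1 then 2 else if ℓ = 2 then 4 else if ℓ = 3 then 2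
  else if ℓ = 4 then 1 else if ℓ = 5 then 2 else 1

/-- The configuration `P = (2, 4, 2, 1, 2, 1)` of size `6` satisfies the non-adjacency
property but is nevertheless not unique: no real sequence satisfies `a_2 > a_4`,
`a_4 + a_5 > a_1 + a_2` and `a_1 + a_2 + a_3 + a_4 > a_2 + a_3 + a_4 + a_5`
simultaneously, and consequently no `A` has `P` as its strictly-unique output
configuration. -/
theorem config_242121_nonadjacent_but_not_unique :
    (¬ ∃ i j : ℕ, 1 ≤ i ∧ i ≤ 6 ∧ 1 ≤ j ∧ j ≤ 6 ∧ P642 j = P642 i + i) ∧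
    (¬ ∃ A : ℕ → ℝ, A 2 > A 4 ∧ A 4 + A 5 > A 1 + A 2 ∧
        A 1 + A 2 + A 3 + A 4 > A 2 + A 3 + A 4 + A 5) ∧
    (¬ ∃ A : ℕ → ℝ, StrictlyUniqueFor 6 A P642) := by

  refine ⟨?_, ?_, ?_⟩
  · rintro ⟨i, j, hi1, hi6, hj1, hj6, hij⟩
    interval_cases i <;> interval_cases j <;> simp [P642] at hij
  · rintro ⟨A, h1, h2, h3⟩
    linarith
  · rintro ⟨A, hA⟩
    have e1 : W A 2 1 > W A 4 1 := hA 1 (by norm_num) (by norm_num) 4 (by norm_num) (by norm_num) (by simp [P642])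
    have e2 : W A 4 2 > W A 1 2 := hA 2 (by norm_num) (by norm_num) 1 (by norm_num) (by norm_num) (by simp [P642])
    have e3 : W A 1 4 > W A 2 4 := hA 4 (by norm_num) (by norm_num) 2 (by norm_num) (by norm_num) (by simp [P642])
    simp only [W, Finset.sum_Ico_eq_sum_range] at e1 e2 e3
    norm_num [Finset.sum_range_succ] at e1 e2 e3
    linarith
end
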